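/- arXiv:1901.08135 — 6 statements merged into one kernel-verified Lean document; each statement's English description precedes it below -/
import Mathlib

section
/- Let (X_j) be a sequence in [0,1], P_j = X_j ∏_{i<j}(1 - X_i), and let u : ℕ → ℕ be strictly increasing with u_1 = 1. Define P^u_j = ∑_{i=u_j}^{u_{j+1}-1} P_i and X^u_j = 1 - ∏_{i=u_j}^{u_{j+1}-1}(1 - X_i). Then P^u_j = X^u_j ∏_{i=1}^{j-1}(1 - X^u_i) for every j ≥ 1. -/
/-!
The weight `X i * ∏ k < i, (1 - X k)` telescopes as `∏ k < i, (1 - X k) - ∏ k ≤ i, (1 - X k)`,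
so the weights of a block `[a, b)` add up to the stick left at `a` times the fraction
`1 - ∏ i ∈ [a, b), (1 - X i)` of it broken off within the block. The sticks left over after
the clumped fractions are the sticks left over at the block boundaries, since the products of
`1 - X` over consecutive blocks concatenate.
-/

open Finset

theorem sum_Ico_mul_prod_range_one_sub {R : Type*} [CommRing R] (X : ℕ → R) {a b : ℕ}
    (hab : a ≤ b) :
    ∑ i ∈ Ico a b, X i * ∏ k ∈ range i, (1 - X k)
      = (1 - ∏ i ∈ Ico a b, (1 - X i)) * ∏ k ∈ range a, (1 - X k) := by
  have telescope : ∀ i, X i * ∏ k ∈ range i, (1 - X k)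
      = -(∏ k ∈ range (i + 1), (1 - X k) - ∏ k ∈ range i, (1 - X k)) := by
    intro i
    rw [prod_range_succ]
    ring
  rw [sum_congr rfl fun i _ => telescope i, sum_neg_distrib,
    sum_Ico_sub (f := fun i => ∏ k ∈ range i, (1 - X k)) hab, ← prod_range_mul_prod_Ico _ hab]
  ring

theorem prod_range_prod_Ico_of_monotone {M : Type*} [CommMonoid M] (g : ℕ → M) {u : ℕ → ℕ}
    (hu : Monotone u) (j : ℕ) :
    ∏ i ∈ range j, ∏ k ∈ Ico (u i) (u (i + 1)), g k = ∏ k ∈ Ico (u 0) (u j), g k := by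
  induction j with
  | zero => simp
  | succ j ih =>
    rw [prod_range_succ, ih, prod_Ico_consecutive _ (hu j.zero_le) (hu j.le_succ)]

theorem stmt3_general (X : ℕ → ℝ)
    (P : ℕ → ℝ) (hP : ∀ j, P j = X j * ∏ i ∈ Finset.range j, (1 - X i))
    (u : ℕ → ℕ) (hu : StrictMono u) (hu0 : u 0 = 0)
    (Pu Xu : ℕ → ℝ)
    (hPu : ∀ j, Pu j = ∑ i ∈ Finset.Ico (u j) (u (j+1)), P i)
    (hXu : ∀ j, Xu j = 1 - ∏ i ∈ Finset.Ico (u j) (u (j+1)), (1 - X i)) :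
    ∀ j, Pu j = Xu j * ∏ i ∈ Finset.range j, (1 - Xu i) := by
  intro j
  have remaining_stick : ∏ i ∈ range j, (1 - Xu i) = ∏ k ∈ range (u j), (1 - X k) := by
    simp_rw [hXu, sub_sub_cancel]
    rw [prod_range_prod_Ico_of_monotone _ hu.monotone, hu0, range_eq_Ico]
  rw [hPu, hXu, remaining_stick]
  simp_rw [hP]
  exact sum_Ico_mul_prod_range_one_sub X (hu.monotone j.le_succ)

theorem stmt3 (X : ℕ → ℝ) (hX : ∀ j, X j ∈ Set.Icc (0:ℝ) 1)
    (P : ℕ → ℝ) (hP : ∀ j, P j = X j * ∏ i ∈ Finset.range j, (1 - X i))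
    (u : ℕ → ℕ) (hu : StrictMono u) (hu0 : u 0 = 0)
    (Pu Xu : ℕ → ℝ)
    (hPu : ∀ j, Pu j = ∑ i ∈ Finset.Ico (u j) (u (j+1)), P i)
    (hXu : ∀ j, Xu j = 1 - ∏ i ∈ Finset.Ico (u j) (u (j+1)), (1 - X i)) :
    ∀ j, Pu j = Xu j * ∏ i ∈ Finset.range j, (1 - Xu i) :=
  stmt3_general X P hP u hu hu0 Pu Xu hPu hXu
end

section
/- For γ > 0 and 0 < a < b, lim_{n→∞} ∑_{s=⌊an⌋}^{⌊bn⌋-1} s^{-1} ∏_{j=s+1}^{⌊bn⌋-1}(1 - γ/j) = γ^{-1}(1 - (a/b)^γ). -/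
/-!
With `P s = ∏_{s ≤ j < B} (1 - γ / j)` one has `s⁻¹ P (s + 1) = γ⁻¹ (P (s + 1) - P s)`, so the sum
telescopes to `γ⁻¹ (1 - P A)`. Taking logarithms, `log P A = -γ ∑_{A ≤ j < B} j⁻¹ + O(γ² / A)` and
the harmonic sum is `log (B / A) + o(1)`, hence `P A → (a / b) ^ γ` for `A = ⌊a n⌋₊`, `B = ⌊b n⌋₊`.
-/

open Filter Finset Real Topology

theorem sum_Ico_inv_mul_prod_one_sub_div {K : Type*} [Field K] [CharZero K] {γ : K} (hγ : γ ≠ 0)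
    {A : ℕ} (hA : 1 ≤ A) (B : ℕ) :
    ∑ s ∈ Ico A B, (s : K)⁻¹ * ∏ j ∈ Ico (s + 1) B, (1 - γ / j)
      = γ⁻¹ * (1 - ∏ j ∈ Ico A B, (1 - γ / j)) := by
  rcases lt_or_ge B A with hBA | hAB
  · simp [Ico_eq_empty_of_le hBA.le]
  set f : ℕ → K := fun s => ∏ j ∈ Ico s B, (1 - γ / j)
  have hstep : ∀ s ∈ Ico A B, (s : K)⁻¹ * f (s + 1) = γ⁻¹ * (f (s + 1) - f s) := by
    intro s hs
    have hs0 : (s : K) ≠ 0 := Nat.cast_ne_zero.2 (by grind)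
    rw [show f s = (1 - γ / s) * f (s + 1) from prod_eq_prod_Ico_succ_bot (mem_Ico.1 hs).2 _]
    field_simp
    ring
  rw [sum_congr rfl hstep, ← mul_sum, sum_Ico_sub f hAB]
  simp [f]

theorem abs_log_one_sub_add_le {x : ℝ} (hx : |x| ≤ 1 / 2) : |log (1 - x) + x| ≤ 2 * x ^ 2 := by
  have h := abs_log_sub_add_sum_range_le (hx.trans_lt (by norm_num)) 1
  simp only [range_one, sum_singleton, zero_add, pow_one, Nat.cast_zero, div_one] at h
  calc |log (1 - x) + x| = |x + log (1 - x)| := by rw [add_comm]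
    _ ≤ |x| ^ 2 / (1 - |x|) := h
    _ ≤ 2 * x ^ 2 := by
      rw [div_le_iff₀ (by linarith), sq_abs]
      nlinarith [mul_le_mul_of_nonneg_left hx (sq_nonneg x)]

theorem abs_div_natCast_le_half {γ : ℝ} {j : ℕ} (h : 2 * |γ| ≤ j) : |γ / j| ≤ 1 / 2 := by
  rcases Nat.eq_zero_or_pos j with rfl | hj
  · simp
  rw [abs_div, Nat.abs_cast, div_le_iff₀ (by positivity)]
  linarith

theorem sum_Ico_inv_sq_le {A : ℕ} (hA : 1 ≤ A) (B : ℕ) :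
    ∑ j ∈ Ico A B, ((j : ℝ) ^ 2)⁻¹ ≤ 2 / A := by
  have hsub : Ico A B ⊆ Ioo (A - 1) B := fun j hj => by grind
  calc ∑ j ∈ Ico A B, ((j : ℝ) ^ 2)⁻¹ ≤ ∑ j ∈ Ioo (A - 1) B, ((j : ℝ) ^ 2)⁻¹ :=
        sum_le_sum_of_subset_of_nonneg hsub fun _ _ _ => by positivity
    _ ≤ 2 / ((A - 1 : ℕ) + 1) := sum_Ioo_inv_sq_le _ _
    _ = 2 / A := by rw [Nat.cast_sub hA, Nat.cast_one, sub_add_cancel]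

theorem abs_sum_log_one_sub_div_add_div_le {γ : ℝ} {A : ℕ} (hA : 1 ≤ A) (hγA : 2 * |γ| ≤ A)
    (B : ℕ) : |∑ j ∈ Ico A B, (log (1 - γ / j) + γ / j)| ≤ 4 * γ ^ 2 / A := by
  calc |∑ j ∈ Ico A B, (log (1 - γ / j) + γ / j)|
      ≤ ∑ j ∈ Ico A B, |log (1 - γ / j) + γ / j| := abs_sum_le_sum_abs _ _
    _ ≤ ∑ j ∈ Ico A B, 2 * γ ^ 2 * ((j : ℝ) ^ 2)⁻¹ := by
      refine sum_le_sum fun j hj => ?_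
      have hjA : (A : ℝ) ≤ j := Nat.cast_le.2 (mem_Ico.1 hj).1
      exact (abs_log_one_sub_add_le (abs_div_natCast_le_half (hγA.trans hjA))).trans_eq
        (by ring)
    _ ≤ 2 * γ ^ 2 * (2 / A) := by
      rw [← mul_sum]
      gcongr
      exact sum_Ico_inv_sq_le hA B
    _ = 4 * γ ^ 2 / A := by ring

section Tendsto

variable {ι : Type*} {l : Filter ι} {A B : ι → ℕ}

theorem tendsto_sum_Ico_log_one_sub_div_add_div (γ : ℝ) (hA : Tendsto A l atTop) :
    Tendsto (fun i => ∑ j ∈ Ico (A i) (B i), (log (1 - γ / j) + γ / j)) l (𝓝 0) := by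
  refine squeeze_zero_norm' ?_ ((tendsto_const_div_atTop_nhds_zero_nat (4 * γ ^ 2)).comp hA)
  filter_upwards [hA.eventually_ge_atTop 1, hA.eventually_ge_atTop ⌈2 * |γ|⌉₊] with i h1 hγ
  exact abs_sum_log_one_sub_div_add_div_le h1 (Nat.ceil_le.1 hγ) _

theorem tendsto_sum_Ico_inv_sub_log_div (hA : Tendsto A l atTop) (hAB : ∀ᶠ i in l, A i ≤ B i) :
    Tendsto (fun i => ∑ j ∈ Ico (A i) (B i), (j : ℝ)⁻¹ - log (B i / A i)) l (𝓝 0) := by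
  have hB : Tendsto B l atTop := tendsto_atTop_mono' l hAB hA
  set H : ℕ → ℝ := fun m => harmonic (m - 1) - log m
  have hH : Tendsto H atTop (𝓝 eulerMascheroniConstant) := by
    refine (tendsto_harmonic_sub_log_add_one.comp (tendsto_sub_atTop_nat 1)).congr' ?_
    filter_upwards [eventually_ge_atTop 1] with m hm
    simp [H, Nat.cast_sub hm]
  have hsum : ∀ {m : ℕ}, 1 ≤ m → ((harmonic (m - 1) : ℚ) : ℝ) = ∑ j ∈ Ico 1 m, (j : ℝ)⁻¹ := by
    intro m hm
    rw [harmonic_eq_sum_Icc, ← Ico_add_one_right_eq_Icc, Nat.sub_add_cancel hm]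
    push_cast
    rfl
  have hdiff := (hH.comp hB).sub (hH.comp hA)
  rw [sub_self] at hdiff
  refine hdiff.congr' ?_
  filter_upwards [hA.eventually_ge_atTop 1, hAB] with i hA1 hAB
  have hA0 : (A i : ℝ) ≠ 0 := by positivity
  have hB0 : (B i : ℝ) ≠ 0 := Nat.cast_ne_zero.2 (by omega)
  simp only [Function.comp_apply, H, hsum hA1, hsum (hA1.trans hAB), log_div hB0 hA0,
    ← sum_Ico_consecutive _ hA1 hAB]
  ring

theorem tendsto_prod_Ico_one_sub_div (γ : ℝ) {r : ℝ} (hA : Tendsto A l atTop)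
    (hAB : ∀ᶠ i in l, A i ≤ B i) (hr : 0 < r)
    (hratio : Tendsto (fun i => (A i : ℝ) / B i) l (𝓝 r)) :
    Tendsto (fun i => ∏ j ∈ Ico (A i) (B i), (1 - γ / j)) l (𝓝 (r ^ γ)) := by
  have hlog := ((((continuousAt_log hr.ne').tendsto.comp hratio).sub
    (tendsto_sum_Ico_inv_sub_log_div hA hAB)).const_mul γ).add
      (tendsto_sum_Ico_log_one_sub_div_add_div (B := B) γ hA)
  have hexp := (continuous_exp.tendsto _).comp hlog
  rw [sub_zero, add_zero, mul_comm, ← rpow_def_of_pos hr] at hexp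
  refine hexp.congr' ?_
  filter_upwards [hA.eventually_ge_atTop ⌈2 * |γ|⌉₊] with i hγA
  have hfactor : ∀ j ∈ Ico (A i) (B i), 0 < 1 - γ / j := fun j hj => by
    have := abs_div_natCast_le_half ((Nat.ceil_le.1 hγA).trans (Nat.cast_le.2 (mem_Ico.1 hj).1))
    linarith [le_abs_self (γ / j)]
  have hinv : log ((A i : ℝ) / B i) = -log (B i / A i) := by rw [← log_inv, inv_div]
  simp only [Function.comp_apply, hinv, sum_add_distrib, mul_sub, mul_sum]
  rw [← exp_log (prod_pos hfactor), log_prod fun j hj => (hfactor j hj).ne']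
  congr 1
  simp only [div_eq_mul_inv]
  ring

end Tendsto

theorem tendsto_natFloor_mul_div_natFloor_mul {a b : ℝ} (ha : 0 ≤ a) (hb : 0 < b) :
    Tendsto (fun n : ℕ => (⌊a * n⌋₊ : ℝ) / ⌊b * n⌋₊) atTop (𝓝 (a / b)) := by
  have hfloor := fun {c : ℝ} (hc : 0 ≤ c) =>
    (tendsto_nat_floor_mul_div_atTop hc).comp tendsto_natCast_atTop_atTop
  refine ((hfloor ha).div (hfloor hb.le) hb.ne').congr' ?_
  filter_upwards [eventually_ne_atTop 0] with n hn
  exact div_div_div_cancel_right₀ (Nat.cast_ne_zero.2 hn) _ _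

theorem stmt10 (γ a b : ℝ) (hγ : 0 < γ) (ha : 0 < a) (hab : a < b) :
    Tendsto (fun n : ℕ =>
        ∑ s ∈ Finset.Ico ⌊a * (n:ℝ)⌋₊ ⌊b * (n:ℝ)⌋₊,
          ((s:ℝ))⁻¹ * ∏ j ∈ Finset.Icc (s+1) (⌊b * (n:ℝ)⌋₊ - 1), (1 - γ / (j:ℝ)))
      atTop (nhds (γ⁻¹ * (1 - (a/b) ^ γ))) := by
  have hb : 0 < b := ha.trans hab
  have hA := tendsto_nat_floor_mul_atTop a ha
  have hAB : ∀ᶠ n : ℕ in atTop, ⌊a * n⌋₊ ≤ ⌊b * n⌋₊ :=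
    Eventually.of_forall fun n => Nat.floor_mono (by gcongr)
  have hprod := tendsto_prod_Ico_one_sub_div γ hA hAB (div_pos ha hb)
    (tendsto_natFloor_mul_div_natFloor_mul ha.le hb)
  refine ((hprod.const_sub 1).const_mul γ⁻¹).congr' ?_
  filter_upwards [hA.eventually_ge_atTop 1] with n hn
  rw [← sum_Ico_inv_mul_prod_one_sub_div hγ.ne' hn]
  refine sum_congr rfl fun s hs => ?_
  rw [← Ico_add_one_right_eq_Icc, Nat.sub_add_cancel (by grind)]
end

section
/- Fix θ > 0 and an integer m ≥ θ, and let Q be a stochastic matrix. Then for n ≥ m, ∏_{j=m+1}^n ((1 - θ/j)I + (θ/j)Q) = [∏_{j=m+1}^n (1 - θ/j)] · (I + ∑_{i=1}^{n-m} Q^i ∑_{m < j_1 < ⋯ < j_i ≤ n} ∏_{l=1}^i θ/(j_l - θ)), i.e., the product of kernels I + G/j with G = θ(Q - I) is a polynomial in Q with nonnegative coefficients summing to 1. -/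
/-!
Each kernel is a polynomial in `Q`, so the ordered product is the image under `aeval Q` of a
product of commuting linear polynomials. Since `j > θ`, each factor splits as
`(1 - θ/j) + (θ/j) X = (1 - θ/j) (1 + θ/(j - θ) X)`, and expanding `∏ (1 + b_j X)` over subsets
gives the coefficients. Evaluating the same identity at `X = 1`, where every factor is `1`, shows
that the coefficients sum to one.
-/

/-- The ordered product `∏_{j=m+1}^{m+k} ((1-θ/j)•I + (θ/j)•Q)` of time-inhomogeneous
transition kernels `K_j = I + G/j` with `G = θ(Q - I)`. -/
noncomputable def kernelProd {𝒳 : Type*} [Fintype 𝒳] [DecidableEq 𝒳]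
    (Q : Matrix 𝒳 𝒳 ℝ) (θ : ℝ) (m : ℕ) : ℕ → Matrix 𝒳 𝒳 ℝ
  | 0 => 1
  | (k+1) => kernelProd Q θ m k *
      ((1 - θ / ((m:ℝ) + k + 1)) • (1 : Matrix 𝒳 𝒳 ℝ) + (θ / ((m:ℝ) + k + 1)) • Q)

open Finset Polynomial

section Expansion

variable {ι R A : Type*}

theorem prod_one_add_smul_eq_sum_powersetCard [CommSemiring R] [CommSemiring A] [Algebra R A]
    (s : Finset ι) (b : ι → R) (x : A) :
    ∏ j ∈ s, (1 + b j • x)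
      = 1 + ∑ i ∈ Icc 1 #s, (∑ t ∈ powersetCard i s, ∏ l ∈ t, b l) • x ^ i := by
  rw [prod_one_add, sum_powerset, sum_range_eq_add_Ico _ (Nat.zero_lt_succ #s),
    Nat.succ_eq_add_one, Ico_add_one_right_eq_Icc, powersetCard_zero, sum_singleton, prod_empty]
  refine congrArg _ (sum_congr rfl fun i _ => ?_)
  rw [sum_smul]
  refine sum_congr rfl fun t ht => ?_
  rw [prod_smul, prod_const, (mem_powersetCard.mp ht).2]

theorem one_sub_div_smul_one_add_div_smul_eq [Field R] [Ring A] [Algebra R A]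
    {θ d : R} (hd : d ≠ 0) (hθd : d ≠ θ) (x : A) :
    (1 - θ / d) • (1 : A) + (θ / d) • x = (1 - θ / d) • (1 + (θ / (d - θ)) • x) := by
  have hdθ : d - θ ≠ 0 := sub_ne_zero.mpr hθd
  rw [smul_add, smul_smul]
  congr 2
  field_simp

theorem prod_one_sub_div_smul_one_add_div_smul_eq [Field R] [CommRing A] [Algebra R A]
    (θ : R) (s : Finset ι) (d : ι → R) (hd : ∀ j ∈ s, d j ≠ 0 ∧ d j ≠ θ) (x : A) :
    ∏ j ∈ s, ((1 - θ / d j) • (1 : A) + (θ / d j) • x)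
      = (∏ j ∈ s, (1 - θ / d j)) •
        (1 + ∑ i ∈ Icc 1 #s, (∑ t ∈ powersetCard i s, ∏ l ∈ t, θ / (d l - θ)) • x ^ i) := by
  rw [prod_congr rfl fun j hj => one_sub_div_smul_one_add_div_smul_eq (hd j hj).1 (hd j hj).2 x,
    prod_smul, prod_one_add_smul_eq_sum_powersetCard]

end Expansion

theorem kernelProd_eq_aeval {𝒳 : Type*} [Fintype 𝒳] [DecidableEq 𝒳]
    (Q : Matrix 𝒳 𝒳 ℝ) (θ : ℝ) (m k : ℕ) :
    kernelProd Q θ m k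
      = aeval Q (∏ j ∈ Icc (m + 1) (m + k), ((1 - θ / j) • (1 : ℝ[X]) + (θ / j) • X)) := by
  induction k with
  | zero => simp [kernelProd]
  | succ k ih =>
    rw [kernelProd, ih, ← add_assoc, prod_Icc_succ_top (by omega), map_mul]
    simp only [map_add, map_smul, map_one, aeval_X, Nat.cast_add, Nat.cast_one]

theorem stmt13 {𝒳 : Type*} [Fintype 𝒳] [DecidableEq 𝒳]
    (Q : Matrix 𝒳 𝒳 ℝ) (θ : ℝ) (hθ : 0 < θ) (m n : ℕ)
    (hm : θ ≤ (m:ℝ)) (hmn : m ≤ n) :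
    kernelProd Q θ m (n - m)
      = (∏ j ∈ Finset.Icc (m+1) n, (1 - θ / (j:ℝ))) •
        ((1 : Matrix 𝒳 𝒳 ℝ) + ∑ i ∈ Finset.Icc 1 (n-m),
          (∑ s ∈ Finset.powersetCard i (Finset.Icc (m+1) n),
            ∏ l ∈ s, θ / ((l:ℝ) - θ)) • Q ^ i)
    ∧ (0 ≤ ∏ j ∈ Finset.Icc (m+1) n, (1 - θ / (j:ℝ)))
    ∧ (∀ i ∈ Finset.Icc 1 (n-m),
        0 ≤ (∏ j ∈ Finset.Icc (m+1) n, (1 - θ / (j:ℝ))) *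
          ∑ s ∈ Finset.powersetCard i (Finset.Icc (m+1) n), ∏ l ∈ s, θ / ((l:ℝ) - θ))
    ∧ (∏ j ∈ Finset.Icc (m+1) n, (1 - θ / (j:ℝ))) *
        (1 + ∑ i ∈ Finset.Icc 1 (n-m),
          ∑ s ∈ Finset.powersetCard i (Finset.Icc (m+1) n), ∏ l ∈ s, θ / ((l:ℝ) - θ)) = 1 := by
  have hθj : ∀ j ∈ Icc (m + 1) n, θ < (j : ℝ) := fun j hj => by
    have : (m : ℝ) + 1 ≤ j := by exact_mod_cast (mem_Icc.mp hj).1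
    linarith
  have hd : ∀ j ∈ Icc (m + 1) n, (j : ℝ) ≠ 0 ∧ (j : ℝ) ≠ θ := fun j hj =>
    ⟨(hθ.trans (hθj j hj)).ne', (hθj j hj).ne'⟩
  have hcard : #(Icc (m + 1) n) = n - m := by rw [Nat.card_Icc]; omega
  have hP : 0 ≤ ∏ j ∈ Icc (m + 1) n, (1 - θ / (j : ℝ)) := prod_nonneg fun j hj =>
    sub_nonneg.mpr ((div_le_one (hθ.trans (hθj j hj))).mpr (hθj j hj).le)
  refine ⟨?_, hP, fun i _ => ?_, ?_⟩
  · rw [kernelProd_eq_aeval, Nat.add_sub_cancel' hmn,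
      prod_one_sub_div_smul_one_add_div_smul_eq θ _ _ hd, hcard]
    simp only [map_smul, map_add, map_one, map_sum, map_pow, aeval_X]
  · exact mul_nonneg hP (sum_nonneg fun t ht => prod_nonneg fun l hl =>
      (div_pos hθ (sub_pos.mpr (hθj l ((mem_powersetCard.mp ht).1 hl)))).le)
  · simpa [hcard] using (prod_one_sub_div_smul_one_add_div_smul_eq θ _ _ hd (1 : ℝ)).symm
end

section
/- With f_m^n(θ) = ∏_{j=m+1}^n(1-θ/j) and m ≥ θ fixed, the coefficient of Q^i in the expansion ∏_{j=m+1}^n((1-θ/j)I + (θ/j)Q), namely [Q^i]_n = θ^i f_m^n(θ) ∑_{m<j_1<⋯<j_i≤n} ∏_{l=1}^i 1/(j_l - θ), tends to 0 as n → ∞ for each fixed i ≥ 0; moreover ∑_{i=0}^{n-m} [Q^i]_n = 1 for all n. -/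
/-!
The coefficients have the generating polynomial
`∑ᵢ [Qⁱ]ₙ xⁱ = ∏_{j=m+1}^n (1 - (1 - x) θ / j)`, because
`(1 - θ/j) (1 + x θ/(j - θ)) = 1 - (1 - x) θ / j`: it is the product of the kernels with `Q`
replaced by the scalar `x`. At `x = 1` this gives total mass one. At `x = 1/2`, nonnegativity of
the coefficients gives `[Qⁱ]ₙ ≤ 2ⁱ ∏ (1 - θ/(2j)) ≤ 2ⁱ exp (-(θ/2) ∑_{j=m+1}^n 1/j)`, which tends
to zero because the harmonic series diverges.
-/

open Filter Finset

theorem Finset.sum_range_pow_mul_sum_powersetCard_prod {ι R : Type*} [CommSemiring R]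
    (t : Finset ι) (b : ι → R) (x : R) :
    ∑ i ∈ range (#t + 1), x ^ i * ∑ s ∈ powersetCard i t, ∏ l ∈ s, b l =
      ∏ l ∈ t, (1 + x * b l) := by
  rw [prod_one_add, sum_powerset]
  refine sum_congr rfl fun i _ ↦ ?_
  rw [mul_sum]
  refine sum_congr rfl fun s hs ↦ ?_
  rw [prod_mul_distrib, prod_const, (mem_powersetCard.mp hs).2]

theorem Real.prod_one_sub_le_exp_neg_sum {ι : Type*} (t : Finset ι) {q : ι → ℝ}
    (hq : ∀ l ∈ t, q l ≤ 1) : ∏ l ∈ t, (1 - q l) ≤ Real.exp (-∑ l ∈ t, q l) := by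
  rw [← sum_neg_distrib, Real.exp_sum]
  exact prod_le_prod (fun l hl ↦ sub_nonneg.mpr (hq l hl)) fun l _ ↦ Real.one_sub_le_exp_neg _

theorem tendsto_sum_Icc_inv_atTop (m : ℕ) :
    Tendsto (fun n : ℕ ↦ ∑ j ∈ Icc (m + 1) n, (j : ℝ)⁻¹) atTop atTop := by
  have hshift : ∀ k, ∑ i ∈ range k, (1 / (i + 1) : ℝ) = ∑ j ∈ Ico 1 (k + 1), (j : ℝ)⁻¹ := by
    intro k
    have := sum_Ico_add' (fun j : ℕ ↦ (j : ℝ)⁻¹) 0 k 1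
    rw [zero_add] at this
    rw [← this, range_eq_Ico]
    simp
  refine (tendsto_atTop_add_const_left _ (-∑ i ∈ range m, (1 / (i + 1) : ℝ))
    Real.tendsto_sum_range_one_div_nat_succ_atTop).congr' ?_
  filter_upwards [eventually_ge_atTop m] with n hn
  rw [hshift, hshift, ← Ico_add_one_right_eq_Icc, ← sum_Ico_consecutive (fun j : ℕ ↦ (j : ℝ)⁻¹)
    (show 1 ≤ m + 1 by omega) (show m + 1 ≤ n + 1 by omega)]
  ring

/-- The coefficient `[Qⁱ]ₙ` of `Qⁱ` in `∏_{j=m+1}^n ((1 - θ/j) I + (θ/j) Q)`. -/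
noncomputable def qCoeff (θ : ℝ) (m i n : ℕ) : ℝ :=
  θ ^ i * (∏ j ∈ Icc (m + 1) n, (1 - θ / (j : ℝ))) *
    ∑ s ∈ powersetCard i (Icc (m + 1) n), ∏ l ∈ s, ((l : ℝ) - θ)⁻¹

lemma qCoeff_eq_mul_sum (θ : ℝ) (m i n : ℕ) :
    qCoeff θ m i n = (∏ j ∈ Icc (m + 1) n, (1 - θ / (j : ℝ))) *
      ∑ s ∈ powersetCard i (Icc (m + 1) n), ∏ l ∈ s, θ / ((l : ℝ) - θ) := by
  rw [qCoeff, mul_comm (θ ^ i : ℝ), mul_assoc, mul_sum]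
  refine congrArg _ (sum_congr rfl fun s hs ↦ ?_)
  simp_rw [div_eq_mul_inv, prod_mul_distrib, prod_const, (mem_powersetCard.mp hs).2]

section

variable {θ : ℝ} {m : ℕ}

lemma lt_of_mem_Icc_add_one (hθm : θ < m + 1) {n j : ℕ} (hj : j ∈ Icc (m + 1) n) : θ < j :=
  hθm.trans_le (by exact_mod_cast (mem_Icc.mp hj).1)

lemma sum_range_pow_mul_qCoeff (hθm : θ < m + 1) (n : ℕ) (x : ℝ) :
    ∑ i ∈ range (n - m + 1), x ^ i * qCoeff θ m i n =
      ∏ j ∈ Icc (m + 1) n, (1 - (1 - x) * θ / j) := by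
  have hcard : #(Icc (m + 1) n) = n - m := by simp
  simp_rw [qCoeff_eq_mul_sum, mul_left_comm _ (∏ j ∈ Icc (m + 1) n, _), ← mul_sum]
  rw [← hcard, sum_range_pow_mul_sum_powersetCard_prod, ← prod_mul_distrib]
  refine prod_congr rfl fun j hj ↦ ?_
  have hjθ : (j : ℝ) - θ ≠ 0 := sub_ne_zero.mpr (lt_of_mem_Icc_add_one hθm hj).ne'
  have hj0 : (j : ℝ) ≠ 0 := Nat.cast_ne_zero.mpr (by have := (mem_Icc.mp hj).1; omega)
  field_simp
  ring

lemma qCoeff_nonneg (hθ : 0 ≤ θ) (hθm : θ < m + 1) (i n : ℕ) : 0 ≤ qCoeff θ m i n := by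
  rw [qCoeff_eq_mul_sum]
  refine mul_nonneg (prod_nonneg fun j hj ↦ ?_) (sum_nonneg fun s hs ↦ prod_nonneg fun l hl ↦ ?_)
  · have hθj := lt_of_mem_Icc_add_one hθm hj
    rw [sub_nonneg, div_le_one (hθ.trans_lt hθj)]
    exact hθj.le
  · exact div_nonneg hθ (sub_nonneg.mpr
      (lt_of_mem_Icc_add_one hθm ((mem_powersetCard.mp hs).1 hl)).le)

lemma pow_mul_qCoeff_le_exp (hθ : 0 ≤ θ) (hθm : θ < m + 1) {x : ℝ} (hx : 0 ≤ x) {i n : ℕ}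
    (hi : i ≤ n - m) :
    x ^ i * qCoeff θ m i n ≤ Real.exp (-((1 - x) * θ * ∑ j ∈ Icc (m + 1) n, (j : ℝ)⁻¹)) := by
  calc x ^ i * qCoeff θ m i n
      ≤ ∑ k ∈ range (n - m + 1), x ^ k * qCoeff θ m k n :=
        single_le_sum (fun k _ ↦ mul_nonneg (pow_nonneg hx k) (qCoeff_nonneg hθ hθm k n))
          (mem_range.mpr (Nat.lt_succ_of_le hi))
    _ = ∏ j ∈ Icc (m + 1) n, (1 - (1 - x) * θ / j) := sum_range_pow_mul_qCoeff hθm n x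
    _ ≤ Real.exp (-∑ j ∈ Icc (m + 1) n, (1 - x) * θ / j) := by
        refine Real.prod_one_sub_le_exp_neg_sum _ fun j hj ↦ ?_
        have hθj := lt_of_mem_Icc_add_one hθm hj
        rw [div_le_one (hθ.trans_lt hθj)]
        nlinarith
    _ = Real.exp (-((1 - x) * θ * ∑ j ∈ Icc (m + 1) n, (j : ℝ)⁻¹)) := by
        simp_rw [mul_sum, div_eq_mul_inv]

lemma tendsto_qCoeff_atTop (hθ : 0 < θ) (hθm : θ < m + 1) (i : ℕ) :
    Tendsto (fun n ↦ qCoeff θ m i n) atTop (nhds 0) := by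
  have hbound : ∀ᶠ n in atTop,
      qCoeff θ m i n ≤ 2 ^ i * Real.exp (-(θ / 2 * ∑ j ∈ Icc (m + 1) n, (j : ℝ)⁻¹)) := by
    filter_upwards [eventually_ge_atTop (m + i)] with n hn
    have h := pow_mul_qCoeff_le_exp hθ.le hθm (x := 1 / 2) (by norm_num)
      (show i ≤ n - m by omega)
    rwa [one_div, inv_pow, inv_mul_le_iff₀ (by positivity),
      show (1 - 2⁻¹) * θ = θ / 2 by ring] at h
  have hlim : Tendsto (fun n ↦ 2 ^ i * Real.exp (-(θ / 2 * ∑ j ∈ Icc (m + 1) n, (j : ℝ)⁻¹)))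
      atTop (nhds 0) := by
    simpa using (Real.tendsto_exp_neg_atTop_nhds_zero.comp
      ((tendsto_sum_Icc_inv_atTop m).const_mul_atTop (half_pos hθ))).const_mul (2 ^ i)
  exact squeeze_zero' (.of_forall fun n ↦ qCoeff_nonneg hθ.le hθm i n) hbound hlim

end

theorem stmt14 (θ : ℝ) (hθ : 0 < θ) (m : ℕ) (hm : θ ≤ (m:ℝ))
    (c : ℕ → ℕ → ℝ)
    (hc : ∀ i n, c i n = θ ^ i * (∏ j ∈ Finset.Icc (m+1) n, (1 - θ / (j:ℝ))) *
        ∑ s ∈ Finset.powersetCard i (Finset.Icc (m+1) n), ∏ l ∈ s, ((l:ℝ) - θ)⁻¹) :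
    (∀ i, Tendsto (fun n => c i n) atTop (nhds 0)) ∧
    (∀ n, m ≤ n → ∑ i ∈ Finset.range (n - m + 1), c i n = 1) := by
  obtain rfl : c = qCoeff θ m := funext₂ hc
  have hθm : θ < m + 1 := by linarith
  refine ⟨tendsto_qCoeff_atTop hθ hθm, fun n _ ↦ ?_⟩
  simpa using sum_range_pow_mul_qCoeff hθm n 1
end

section
/- Let G be a k×k generator matrix with minimal polynomial p_min(λ) = λ q(λ) where q(0) ≠ 0, and define p_j(λ) = (p_min(λ) - p_min(j))/(λ - j). Then (j - λ) p_j(λ) = j q(j) - λ q(λ) as polynomials, and consequently (I - G/j) · p_j(G)/q(j) = I for every positive integer j, i.e., (I - G/j)^{-1} = p_j(G)/q(j). -/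
open Polynomial Matrix

lemma gen_no_pos_eig {𝒳 : Type*} [Fintype 𝒳] [DecidableEq 𝒳] [Nonempty 𝒳]
    (G : Matrix 𝒳 𝒳 ℝ)
    (hoff : ∀ i j, i ≠ j → 0 ≤ G i j)
    (hrow : ∀ i, ∑ j, G i j = 0)
    (v : 𝒳 → ℝ) (hv : v ≠ 0) (c : ℝ) (hc : 0 < c)
    (heig : G.mulVec v = c • v) : False := by
  obtain ⟨i, hi⟩ := Finite.exists_max (fun k => |v k|)
  set s : ℝ := if 0 ≤ v i then 1 else -1 with hs
  set w : 𝒳 → ℝ := s • v with hw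
  have hwi : w i = |v i| := by
    simp only [hw, hs, Pi.smul_apply, smul_eq_mul]
    split_ifs with h
    · simp [abs_of_nonneg h]
    · simp [abs_of_neg (lt_of_not_ge h)]
  have hwk : ∀ k, w k ≤ w i := by
    intro k
    have : |w k| = |v k| := by
      simp only [hw, hs, Pi.smul_apply, smul_eq_mul]
      split_ifs <;> simp
    calc w k ≤ |w k| := le_abs_self _
      _ = |v k| := this
      _ ≤ |v i| := hi k
      _ = w i := hwi.symm
  have hwipos : 0 < w i := by
    rw [hwi]
    obtain ⟨k, hk⟩ := Function.ne_iff.mp hv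
    exact lt_of_lt_of_le (abs_pos.mpr hk) (hi k)
  have heigw : G.mulVec w = c • w := by
    rw [hw]
    rw [Matrix.mulVec_smul, heig, smul_comm]
  have key : c * w i ≤ 0 := by
    have h1 : (G.mulVec w) i = c * w i := by rw [heigw]; simp
    have h2 : (G.mulVec w) i = ∑ k, G i k * w k := by
      simp [Matrix.mulVec, dotProduct]
    have h3 : ∑ k, G i k * w k ≤ ∑ k, G i k * w i := by
      rw [← Finset.add_sum_erase _ (fun k => G i k * w k) (Finset.mem_univ i),
          ← Finset.add_sum_erase _ (fun k => G i k * w i) (Finset.mem_univ i)]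
      refine add_le_add le_rfl (Finset.sum_le_sum ?_)
      intro k hk
      have hki : k ≠ i := Finset.ne_of_mem_erase hk
      exact mul_le_mul_of_nonneg_left (hwk k) (hoff i k hki.symm)
    have h4 : ∑ k, G i k * w i = 0 := by
      rw [← Finset.sum_mul, hrow, zero_mul]
    linarith [h1, h2, h3, h4]
  nlinarith

theorem stmt17 {𝒳 : Type*} [Fintype 𝒳] [DecidableEq 𝒳] [Nonempty 𝒳]
    (G : Matrix 𝒳 𝒳 ℝ)
    (hoff : ∀ i j, i ≠ j → 0 ≤ G i j)
    (hrow : ∀ i, ∑ j, G i j = 0)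
    (q : Polynomial ℝ)
    (hmin : minpoly ℝ G = Polynomial.X * q)
    (hq0 : q.eval 0 ≠ 0) :
    ∀ j : ℕ, 0 < j →
      q.eval (j:ℝ) ≠ 0 ∧
      ∃ p : Polynomial ℝ,
        (Polynomial.C (j:ℝ) - Polynomial.X) * p
            = Polynomial.C ((j:ℝ) * q.eval (j:ℝ)) - Polynomial.X * q ∧
        ((1 : Matrix 𝒳 𝒳 ℝ) - ((j:ℝ)⁻¹) • G) *
          ((q.eval (j:ℝ))⁻¹ • (Polynomial.aeval G) p) = 1 := by
  intro j hj
  have hjR : (0:ℝ) < (j:ℝ) := by exact_mod_cast hj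
  have hjne : (j:ℝ) ≠ 0 := ne_of_gt hjR
  -- q(j) ≠ 0
  have hqj : q.eval (j:ℝ) ≠ 0 := by
    intro h0
    -- then j is a root of minpoly, so G has eigenvalue j
    have hroot : (minpoly ℝ G).IsRoot (j:ℝ) := by
      rw [hmin]; simp [h0]
    have hdvd : (X - C (j:ℝ)) ∣ minpoly ℝ G := dvd_iff_isRoot.mpr hroot
    obtain ⟨r, hr⟩ := hdvd
    have hint : IsIntegral ℝ G := IsIntegral.of_finite ℝ G
    have hrne : Polynomial.aeval G r ≠ 0 := by
      intro hr0
      have hrnz : r ≠ 0 := by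
        intro h
        exact minpoly.ne_zero hint (by rw [hr, h, mul_zero])
      have hle := minpoly.degree_le_of_ne_zero ℝ G hrnz hr0
      have h1 : (minpoly ℝ G).natDegree ≤ r.natDegree :=
        Polynomial.natDegree_le_natDegree hle
      have h2 : (minpoly ℝ G).natDegree = 1 + r.natDegree := by
        rw [hr, Polynomial.natDegree_mul (Polynomial.X_sub_C_ne_zero _) hrnz,
          Polynomial.natDegree_X_sub_C]
      omega
    have haeval : (G - (j:ℝ) • 1) * Polynomial.aeval G r = 0 := by
      have h := minpoly.aeval ℝ G
      rw [hr, _root_.map_mul, map_sub, Polynomial.aeval_X, Polynomial.aeval_C,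
        Algebra.algebraMap_eq_smul_one] at h
      exact h
    -- get a nonzero column of aeval G r
    set M := Polynomial.aeval G r with hM
    obtain ⟨a, b, hab⟩ : ∃ a b, M a b ≠ 0 := by
      by_contra h
      push_neg at h
      exact hrne (by ext a b; exact h a b)
    set v : 𝒳 → ℝ := fun i => M i b with hv
    have hvne : v ≠ 0 := Function.ne_iff.mpr ⟨a, hab⟩
    have heig : G.mulVec v = (j:ℝ) • v := by
      ext i
      have h0 : ((G - (j:ℝ) • 1) * M) i b = 0 := by rw [haeval]; rfl
      have : (G * M) i b - (j:ℝ) * M i b = 0 := by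
        simpa [Matrix.sub_mul, Matrix.smul_mul, Matrix.one_mul] using h0
      have hmul : (G * M) i b = ∑ k, G i k * M k b := by
        simp [Matrix.mul_apply]
      simp only [Matrix.mulVec, dotProduct, Pi.smul_apply, smul_eq_mul, hv]
      rw [← hmul]; linarith
    exact gen_no_pos_eig G hoff hrow v hvne (j:ℝ) hjR heig
  refine ⟨hqj, ?_⟩
  -- polynomial factorization
  have hroot : (X * q - C ((j:ℝ) * q.eval (j:ℝ))).IsRoot (j:ℝ) := by
    simp [IsRoot]
  obtain ⟨p, hp⟩ := dvd_iff_isRoot.mpr hroot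
  have hpoly : (C (j:ℝ) - X) * p = C ((j:ℝ) * q.eval (j:ℝ)) - X * q := by
    have : (X - C (j:ℝ)) * p = X * q - C ((j:ℝ) * q.eval (j:ℝ)) := hp.symm
    linear_combination -this
  refine ⟨p, hpoly, ?_⟩
  -- matrix identity
  have hGq : Polynomial.aeval G (X * q) = 0 := by
    rw [← hmin]; exact minpoly.aeval ℝ G
  have key : ((j:ℝ) • 1 - G) * Polynomial.aeval G p = ((j:ℝ) * q.eval (j:ℝ)) • 1 := by
    have h := congrArg (Polynomial.aeval G) hpoly
    rw [_root_.map_mul, map_sub, map_sub, Polynomial.aeval_C, Polynomial.aeval_X, hGq, sub_zero,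
      Algebra.algebraMap_eq_smul_one, Polynomial.aeval_C,
      Algebra.algebraMap_eq_smul_one] at h
    exact h
  have hexpand : (1 : Matrix 𝒳 𝒳 ℝ) - ((j:ℝ)⁻¹) • G = ((j:ℝ)⁻¹) • (((j:ℝ)) • 1 - G) := by
    rw [smul_sub, smul_smul, inv_mul_cancel₀ hjne, one_smul]
  rw [hexpand, Matrix.smul_mul, Matrix.mul_smul, key, smul_smul, smul_smul]
  have hone : (j:ℝ)⁻¹ * (q.eval (j:ℝ))⁻¹ * ((j:ℝ) * q.eval (j:ℝ)) = 1 := by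
    field_simp
  rw [hone, one_smul]
end

section
/- Let G be an irreducible k×k generator matrix with minimal polynomial λ q(λ), q(0) ≠ 0, and let μ be the unique stochastic left eigenvector with μ^t G = 0. Then p_0(G)/q(0) = q(G)/q(0) is the matrix with all rows equal to μ^t. -/
section aux

variable {𝒳 : Type*} [Fintype 𝒳] [DecidableEq 𝒳] [Nonempty 𝒳]

private lemma aux_vecMul_pow {A : Matrix 𝒳 𝒳 ℝ} {v : 𝒳 → ℝ}
    (h : Matrix.vecMul v A = v) : ∀ n : ℕ, Matrix.vecMul v (A ^ n) = v := by
  intro n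
  induction n with
  | zero => simp [Matrix.vecMul_one]
  | succ n ih => rw [pow_succ, ← Matrix.vecMul_vecMul, ih, h]

private lemma aux_pow_nonneg {A : Matrix 𝒳 𝒳 ℝ} (hA : ∀ i j, 0 ≤ A i j) :
    ∀ (n : ℕ) (i j), 0 ≤ (A ^ n) i j := by
  intro n
  induction n with
  | zero =>
    intro i j
    by_cases h : i = j <;> simp [Matrix.one_apply, h]
  | succ n ih =>
    intro i j
    rw [pow_succ, Matrix.mul_apply]
    exact Finset.sum_nonneg fun l _ => mul_nonneg (ih i l) (hA l j)

private lemma aux_mu_pos {A : Matrix 𝒳 𝒳 ℝ} (hA : ∀ i j, 0 ≤ A i j)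
    (hirr : ∀ i j, ∃ n : ℕ, 0 < (A ^ n) i j)
    {μ : 𝒳 → ℝ} (hμ0 : ∀ i, 0 ≤ μ i) (hμ1 : ∑ i, μ i = 1)
    (hμA : Matrix.vecMul μ A = μ) : ∀ j, 0 < μ j := by
  obtain ⟨i0, hi0⟩ : ∃ i, 0 < μ i := by
    by_contra h
    push_neg at h
    have : ∀ i, μ i = 0 := fun i => le_antisymm (h i) (hμ0 i)
    simp [this] at hμ1
  intro j
  obtain ⟨n, hn⟩ := hirr i0 j
  have key : μ j = ∑ l, μ l * (A ^ n) l j := by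
    conv_lhs => rw [← aux_vecMul_pow hμA n]
    rfl
  have hterm : μ i0 * (A ^ n) i0 j ≤ ∑ l, μ l * (A ^ n) l j :=
    Finset.single_le_sum
      (fun l _ => mul_nonneg (hμ0 l) (aux_pow_nonneg hA n l j))
      (Finset.mem_univ i0)
  have := mul_pos hi0 hn
  linarith [key ▸ hterm]

private lemma aux_unique {A : Matrix 𝒳 𝒳 ℝ} (hA : ∀ i j, 0 ≤ A i j)
    (hirr : ∀ i j, ∃ n : ℕ, 0 < (A ^ n) i j)
    {μ : 𝒳 → ℝ} (hμ0 : ∀ i, 0 ≤ μ i) (hμ1 : ∑ i, μ i = 1)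
    (hμA : Matrix.vecMul μ A = μ)
    {v : 𝒳 → ℝ} (hvA : Matrix.vecMul v A = v) :
    v = (∑ i, v i) • μ := by
  have hμpos := aux_mu_pos hA hirr hμ0 hμ1 hμA
  obtain ⟨j0, -, hj0⟩ := Finset.exists_min_image Finset.univ (fun j => v j / μ j)
    ⟨Classical.arbitrary 𝒳, Finset.mem_univ _⟩
  set t : ℝ := v j0 / μ j0 with ht
  set w : 𝒳 → ℝ := v - t • μ with hw
  have hwA : Matrix.vecMul w A = w := by
    rw [hw, Matrix.sub_vecMul, Matrix.smul_vecMul, hμA, hvA]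
  have hw0 : ∀ i, 0 ≤ w i := by
    intro i
    have h1 : t ≤ v i / μ i := hj0 i (Finset.mem_univ i)
    have h2 : t * μ i ≤ v i := (le_div_iff₀ (hμpos i)).mp h1
    simp only [hw, Pi.sub_apply, Pi.smul_apply, smul_eq_mul]
    linarith
  have hwj0 : w j0 = 0 := by
    simp only [hw, Pi.sub_apply, Pi.smul_apply, smul_eq_mul, ht]
    rw [div_mul_cancel₀ _ (ne_of_gt (hμpos j0))]
    ring
  have hwall : ∀ i, w i = 0 := by
    intro i
    obtain ⟨n, hn⟩ := hirr i j0
    have key : (0 : ℝ) = ∑ l, w l * (A ^ n) l j0 := by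
      rw [← hwj0]
      conv_lhs => rw [← aux_vecMul_pow hwA n]
      rfl
    have hterm : ∀ l ∈ Finset.univ, (0 : ℝ) ≤ w l * (A ^ n) l j0 :=
      fun l _ => mul_nonneg (hw0 l) (aux_pow_nonneg hA n l j0)
    have := (Finset.sum_eq_zero_iff_of_nonneg hterm).mp key.symm i (Finset.mem_univ i)
    rcases mul_eq_zero.mp this with h | h
    · exact h
    · exact absurd h (ne_of_gt hn)
  have hv : ∀ i, v i = t * μ i := by
    intro i
    have := hwall i
    simp only [hw, Pi.sub_apply, Pi.smul_apply, smul_eq_mul] at this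
    linarith
  have hsum : ∑ i, v i = t := by
    simp only [hv, ← Finset.mul_sum, hμ1, mul_one]
  funext i
  simp [hsum, hv i]

private lemma aux_vecMul_smulmat (c : ℝ) (M : Matrix 𝒳 𝒳 ℝ) (v : 𝒳 → ℝ) :
    Matrix.vecMul v (c • M) = c • Matrix.vecMul v M := by
  ext j
  simp [Matrix.vecMul, dotProduct, Finset.mul_sum, mul_left_comm]

end aux

theorem stmt18 {𝒳 : Type*} [Fintype 𝒳] [DecidableEq 𝒳] [Nonempty 𝒳]
    (G : Matrix 𝒳 𝒳 ℝ)
    (hoff : ∀ i j, i ≠ j → 0 ≤ G i j) (hrow : ∀ i, ∑ j, G i j = 0)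
    (θ : ℝ) (hθ : 0 < θ)
    (hQnn : ∀ i j, 0 ≤ ((1 : Matrix 𝒳 𝒳 ℝ) + θ⁻¹ • G) i j)
    (hirr : ∀ i j, ∃ n : ℕ, 0 < (((1 : Matrix 𝒳 𝒳 ℝ) + θ⁻¹ • G) ^ n) i j)
    (q : Polynomial ℝ) (hmin : minpoly ℝ G = Polynomial.X * q) (hq0 : q.eval 0 ≠ 0)
    (μ : 𝒳 → ℝ) (hμ0 : ∀ i, 0 ≤ μ i) (hμ1 : ∑ i, μ i = 1)
    (hstat : Matrix.vecMul μ G = 0) :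
    (q.eval 0)⁻¹ • (Polynomial.aeval G) q = Matrix.of (fun _ j => μ j) := by
  classical
  set A : Matrix 𝒳 𝒳 ℝ := 1 + θ⁻¹ • G with hAdef
  have hfix : ∀ v : 𝒳 → ℝ, Matrix.vecMul v G = 0 → Matrix.vecMul v A = v := by
    intro v hv
    rw [hAdef, Matrix.vecMul_add, Matrix.vecMul_one, aux_vecMul_smulmat, hv]
    simp
  have hqG : (Polynomial.aeval G) q * G = 0 := by
    have h1 : (Polynomial.aeval G) (Polynomial.X * q) = 0 := by
      rw [← hmin]; exact minpoly.aeval ℝ G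
    calc (Polynomial.aeval G) q * G
        = (Polynomial.aeval G) (q * Polynomial.X) := by simp [map_mul]
      _ = 0 := by rw [mul_comm q Polynomial.X, h1]
  have hpowrow : ∀ (n : ℕ) (i : 𝒳),
      ∑ j, (G ^ n) i j = (if n = 0 then (1 : ℝ) else 0) := by
    intro n i
    cases n with
    | zero => simp [Matrix.one_apply]
    | succ n =>
      simp only [Nat.succ_ne_zero, if_false]
      rw [pow_succ]
      simp only [Matrix.mul_apply]
      rw [Finset.sum_comm]
      simp only [← Finset.mul_sum, hrow]
      simp
  have hqrow : ∀ i, ∑ j, ((Polynomial.aeval G) q) i j = q.eval 0 := by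
    intro i
    rw [Polynomial.aeval_eq_sum_range]
    simp only [Matrix.sum_apply, Matrix.smul_apply, smul_eq_mul]
    rw [Finset.sum_comm]
    simp only [← Finset.mul_sum, hpowrow, mul_ite, mul_one, mul_zero]
    rw [Finset.sum_eq_single 0]
    · simp [Polynomial.coeff_zero_eq_eval_zero]
    · intro b _ hb; simp [hb]
    · intro h; exact absurd (Finset.mem_range.mpr (Nat.succ_pos _)) h
  have key : ∀ i, (fun j => ((q.eval 0)⁻¹ • (Polynomial.aeval G) q) i j) = μ := by
    intro i
    set r : 𝒳 → ℝ := fun j => ((q.eval 0)⁻¹ • (Polynomial.aeval G) q) i j with hr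
    have hrG : Matrix.vecMul r G = 0 := by
      ext j
      have h0 : ∑ l, (q.eval 0)⁻¹ * ((Polynomial.aeval G) q) i l * G l j = 0 := by
        simp only [mul_assoc]
        rw [← Finset.mul_sum, ← Matrix.mul_apply, hqG]
        simp
      simpa [Matrix.vecMul, dotProduct, hr, Matrix.smul_apply, smul_eq_mul]
        using h0
    have hrsum : ∑ j, r j = 1 := by
      simp only [hr, Matrix.smul_apply, smul_eq_mul, ← Finset.mul_sum, hqrow]
      exact inv_mul_cancel₀ hq0
    have hμA : Matrix.vecMul μ A = μ := hfix μ hstat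
    have hrA : Matrix.vecMul r A = r := hfix r hrG
    have hru := aux_unique hQnn hirr hμ0 hμ1 hμA hrA
    rw [hrsum] at hru
    simpa using hru
  ext i j
  have := congrFun (key i) j
  simpa using this
end
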